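/- arXiv:1809.01223 — 5 statements merged into one kernel-verified Lean document; each statement's English description precedes it below -/
import Mathlib

section
/- Any finite collection of mutually independent real-valued random variables is associated: for any two coordinatewise non-decreasing functions h, g : ℝⁿ → ℝ with h(X₁,…,Xₙ) and g(X₁,…,Xₙ) square-integrable, Cov(h(X₁,…,Xₙ), g(X₁,…,Xₙ)) ≥ 0. -/
/-!
Harris' inequality. On a linearly ordered space, Chebyshev's integral inequality
`(∫ f)(∫ g) ≤ ∫ f g` follows by integrating the rearrangement inequality
`f x g y + f y g x ≤ f x g x + f y g y` over `μ × μ`. Association passes to products: by Fubini,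
apply it on each fibre `{x} × β`, then to the partial integrals `x ↦ ∫ f(x, y) dν(y)`, which are
again monotone. Independence says that the joint law of `(X₁, …, Xₙ)` is the product of the
marginals, so it is associated; square-integrable functions are reached by truncating at `±N` and
dominated convergence.
-/

open MeasureTheory ProbabilityTheory Filter Topology

section Truncation

variable {R : Type*} [AddCommGroup R] [LinearOrder R] [IsOrderedAddMonoid R] {N : R}

theorem abs_max_neg_min_le (hN : 0 ≤ N) (t : R) : |max (-N) (min t N)| ≤ |t| :=
  abs_le.2 ⟨le_max_of_le_right (le_min (neg_abs_le t) ((neg_nonpos.2 (abs_nonneg t)).trans hN)),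
    max_le ((neg_nonpos.2 hN).trans (abs_nonneg t)) ((min_le_left t N).trans (le_abs_self t))⟩

theorem abs_max_neg_min_le_self (hN : 0 ≤ N) (t : R) : |max (-N) (min t N)| ≤ N :=
  abs_le.2 ⟨le_max_left _ _, max_le (neg_le_self hN) (min_le_right _ _)⟩

theorem tendsto_max_neg_min (t : ℝ) :
    Tendsto (fun N : ℕ => max (-(N : ℝ)) (min t N)) atTop (𝓝 t) := by
  refine tendsto_const_nhds.congr' ?_
  filter_upwards [eventually_ge_atTop ⌈|t|⌉₊] with N hN
  have ht : |t| ≤ N := Nat.ceil_le.1 hN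
  rw [min_eq_left (le_abs_self t |>.trans ht), max_eq_right ((neg_le_neg ht).trans (neg_abs_le t))]

end Truncation

namespace MeasureTheory.Measure

variable {α β : Type*} [MeasurableSpace α] [MeasurableSpace β]

/-- Association tested on bounded functions only;
`IsAssociated.integral_mul_integral_le_of_memLp` extends it to square-integrable ones. -/
def IsAssociated [Preorder α] (μ : Measure α) : Prop :=
  ∀ ⦃f g : α → ℝ⦄ (C : ℝ), Monotone f → Monotone g → Measurable f → Measurable g →
    (∀ x, ‖f x‖ ≤ C) → (∀ x, ‖g x‖ ≤ C) →
    (∫ x, f x ∂μ) * (∫ x, g x ∂μ) ≤ ∫ x, f x * g x ∂μ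

theorem _root_.Monovary.integral_mul_integral_le (μ : Measure α) [IsProbabilityMeasure μ]
    {f g : α → ℝ} (hfg : Monovary f g) (hf : Integrable f μ) (hg : Integrable g μ)
    (hfgi : Integrable (fun x => f x * g x) μ) :
    (∫ x, f x ∂μ) * (∫ x, g x ∂μ) ≤ ∫ x, f x * g x ∂μ := by
  have hcross : Integrable (fun z : α × α => f z.1 * g z.2 + g z.1 * f z.2) (μ.prod μ) :=
    (hf.mul_prod hg).add (hg.mul_prod hf)
  have key : ∫ z, (f z.1 * g z.2 + g z.1 * f z.2) ∂μ.prod μ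
      ≤ ∫ z, (f z.1 * g z.1 + f z.2 * g z.2) ∂μ.prod μ :=
    integral_mono hcross ((hfgi.comp_fst μ).add (hfgi.comp_snd μ)) fun z => by
      linarith [hfg.mul_add_mul_le_mul_add_mul z.1 z.2, mul_comm (f z.2) (g z.1)]
  rw [integral_add (hf.mul_prod hg) (hg.mul_prod hf), integral_prod_mul f g, integral_prod_mul g f,
    integral_add (hfgi.comp_fst μ) (hfgi.comp_snd μ),
    integral_fun_fst (fun x => f x * g x), integral_fun_snd (fun x => f x * g x)] at key
  simp only [probReal_univ, one_smul] at key
  linarith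

theorem isAssociated_of_linearOrder [LinearOrder α] (μ : Measure α) [IsProbabilityMeasure μ] :
    μ.IsAssociated := fun f _ C hf hg hfm hgm hfC hgC =>
  have hfi : Integrable f μ := .of_bound hfm.aestronglyMeasurable C (.of_forall hfC)
  (hf.monovary hg).integral_mul_integral_le μ hfi
    (.of_bound hgm.aestronglyMeasurable C (.of_forall hgC))
    (hfi.mul_bdd hgm.aestronglyMeasurable (.of_forall hgC))

theorem isAssociated_of_unique [Preorder α] [Unique α] (μ : Measure α) [IsProbabilityMeasure μ] :
    μ.IsAssociated := by
  intro _ _ _ _ _ _ _ _ _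
  simp only [integral_unique, probReal_univ, one_smul, le_refl]

theorem IsAssociated.map [Preorder α] [Preorder β] {μ : Measure α} (hμ : μ.IsAssociated)
    {T : α → β} (hT : Monotone T) (hTm : Measurable T) : (μ.map T).IsAssociated := by
  intro f g C hf hg hfm hgm hfC hgC
  rw [integral_map hTm.aemeasurable hfm.aestronglyMeasurable,
    integral_map hTm.aemeasurable hgm.aestronglyMeasurable,
    integral_map (f := fun y => f y * g y) hTm.aemeasurable (hfm.mul hgm).aestronglyMeasurable]
  exact hμ C (hf.comp hT) (hg.comp hT) (hfm.comp hTm) (hgm.comp hTm) (fun _ => hfC _)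
    (fun _ => hgC _)

section Prod

variable {ν : Measure β} {C : ℝ}

theorem monotone_integral_prod_right [Preorder α] [Preorder β] [IsFiniteMeasure ν]
    {F : α × β → ℝ} (hF : Monotone F) (hFm : Measurable F) (hFC : ∀ z, ‖F z‖ ≤ C) :
    Monotone fun x => ∫ y, F (x, y) ∂ν := fun _ _ hx =>
  integral_mono
    (.of_bound (hFm.comp measurable_prodMk_left).aestronglyMeasurable C (.of_forall fun _ => hFC _))
    (.of_bound (hFm.comp measurable_prodMk_left).aestronglyMeasurable C (.of_forall fun _ => hFC _))
    fun _ => hF ⟨hx, le_rfl⟩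

theorem norm_integral_le_of_forall_norm_le [IsProbabilityMeasure ν] {f : β → ℝ}
    (hf : ∀ y, ‖f y‖ ≤ C) : ‖∫ y, f y ∂ν‖ ≤ C := by
  simpa using norm_integral_le_of_norm_le_const (μ := ν) (.of_forall hf)

theorem IsAssociated.prod [Preorder α] [Preorder β] {μ : Measure α} [IsProbabilityMeasure μ]
    [IsProbabilityMeasure ν] (hμ : μ.IsAssociated) (hν : ν.IsAssociated) :
    (μ.prod ν).IsAssociated := by
  intro f g C hf hg hfm hgm hfC hgC
  have hfi : Integrable f (μ.prod ν) := .of_bound hfm.aestronglyMeasurable C (.of_forall hfC)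
  have hgi : Integrable g (μ.prod ν) := .of_bound hgm.aestronglyMeasurable C (.of_forall hgC)
  have hfgi : Integrable (fun z => f z * g z) (μ.prod ν) :=
    hfi.mul_bdd hgm.aestronglyMeasurable (.of_forall hgC)
  have hfm' := hfm.stronglyMeasurable.integral_prod_right' (ν := ν)
  have hgm' := hgm.stronglyMeasurable.integral_prod_right' (ν := ν)
  calc (∫ z, f z ∂μ.prod ν) * ∫ z, g z ∂μ.prod ν
      = (∫ x, ∫ y, f (x, y) ∂ν ∂μ) * ∫ x, ∫ y, g (x, y) ∂ν ∂μ := by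
        rw [integral_prod f hfi, integral_prod g hgi]
    _ ≤ ∫ x, (∫ y, f (x, y) ∂ν) * ∫ y, g (x, y) ∂ν ∂μ :=
        hμ C (monotone_integral_prod_right hf hfm hfC) (monotone_integral_prod_right hg hgm hgC)
          hfm'.measurable hgm'.measurable
          (fun x => norm_integral_le_of_forall_norm_le fun y => hfC (x, y))
          (fun x => norm_integral_le_of_forall_norm_le fun y => hgC (x, y))
    _ ≤ ∫ x, ∫ y, f (x, y) * g (x, y) ∂ν ∂μ :=
        integral_mono
          ((hfi.integral_prod_left).mul_bdd hgm'.aestronglyMeasurable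
            (.of_forall fun x => norm_integral_le_of_forall_norm_le fun y => hgC (x, y)))
          hfgi.integral_prod_left fun x =>
            hν C (fun _ _ hy => hf ⟨le_rfl, hy⟩) (fun _ _ hy => hg ⟨le_rfl, hy⟩)
              (hfm.comp measurable_prodMk_left) (hgm.comp measurable_prodMk_left)
              (fun _ => hfC _) (fun _ => hgC _)
    _ = ∫ z, f z * g z ∂μ.prod ν := (integral_prod _ hfgi).symm

end Prod

theorem _root_.MeasurableEquiv.monotone_piFinSuccAbove_symm {n : ℕ} {α : Fin (n + 1) → Type*}
    [∀ i, MeasurableSpace (α i)] [∀ i, Preorder (α i)] (i : Fin (n + 1)) :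
    Monotone (MeasurableEquiv.piFinSuccAbove α i).symm := fun p q hpq => by
  change Fin.insertNth i p.1 p.2 ≤ Fin.insertNth i q.1 q.2
  exact Fin.insertNth_le_iff.2
    ⟨by simpa only [Fin.insertNth_apply_same] using hpq.1,
     fun j => by simpa only [Fin.insertNth_apply_succAbove] using hpq.2 j⟩

theorem IsAssociated.pi {n : ℕ} {α : Fin n → Type*} [∀ i, MeasurableSpace (α i)]
    [∀ i, Preorder (α i)] {μ : ∀ i, Measure (α i)} [∀ i, IsProbabilityMeasure (μ i)]
    (hμ : ∀ i, (μ i).IsAssociated) : (Measure.pi μ).IsAssociated := by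
  induction n with
  | zero => exact isAssociated_of_unique _
  | succ n ih =>
    rw [← ((measurePreserving_piFinSuccAbove μ 0).symm _).map_eq]
    exact ((hμ 0).prod (ih fun j => hμ _)).map (MeasurableEquiv.monotone_piFinSuccAbove_symm 0)
      (MeasurableEquiv.measurable _)

theorem IsAssociated.integral_mul_integral_le_of_memLp [Preorder α] {μ : Measure α}
    [IsFiniteMeasure μ] (hμ : μ.IsAssociated) {f g : α → ℝ} (hf : Monotone f) (hg : Monotone g)
    (hfm : Measurable f) (hgm : Measurable g) (hf2 : MemLp f 2 μ) (hg2 : MemLp g 2 μ) :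
    (∫ x, f x ∂μ) * (∫ x, g x ∂μ) ≤ ∫ x, f x * g x ∂μ := by
  set F : ℕ → α → ℝ := fun N x => max (-(N : ℝ)) (min (f x) N)
  set G : ℕ → α → ℝ := fun N x => max (-(N : ℝ)) (min (g x) N)
  have hFm : ∀ N, Measurable (F N) := fun N => measurable_const.max (hfm.min measurable_const)
  have hGm : ∀ N, Measurable (G N) := fun N => measurable_const.max (hgm.min measurable_const)
  have hF : ∀ N x, |F N x| ≤ |f x| := fun N x => abs_max_neg_min_le N.cast_nonneg _
  have hG : ∀ N x, |G N x| ≤ |g x| := fun N x => abs_max_neg_min_le N.cast_nonneg _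
  have hFG : ∀ N, (∫ x, F N x ∂μ) * (∫ x, G N x ∂μ) ≤ ∫ x, F N x * G N x ∂μ := fun N =>
    hμ N (fun _ _ hxy => max_le_max le_rfl (min_le_min (hf hxy) le_rfl))
      (fun _ _ hxy => max_le_max le_rfl (min_le_min (hg hxy) le_rfl)) (hFm N) (hGm N)
      (fun _ => abs_max_neg_min_le_self N.cast_nonneg _)
      (fun _ => abs_max_neg_min_le_self N.cast_nonneg _)
  have hF_lim := tendsto_integral_of_dominated_convergence (fun x => |f x|)
    (fun N => (hFm N).aestronglyMeasurable) (hf2.integrable one_le_two).abs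
    (fun N => .of_forall (hF N)) (.of_forall fun x => tendsto_max_neg_min (f x))
  have hG_lim := tendsto_integral_of_dominated_convergence (fun x => |g x|)
    (fun N => (hGm N).aestronglyMeasurable) (hg2.integrable one_le_two).abs
    (fun N => .of_forall (hG N)) (.of_forall fun x => tendsto_max_neg_min (g x))
  have hFG_lim := tendsto_integral_of_dominated_convergence (fun x => |f x * g x|)
    (fun N => ((hFm N).mul (hGm N)).aestronglyMeasurable) (hf2.integrable_mul hg2).abs
    (fun N => .of_forall fun x => by
      simpa only [Real.norm_eq_abs, Pi.mul_apply, abs_mul] using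
        mul_le_mul (hF N x) (hG N x) (abs_nonneg _) (abs_nonneg _))
    (.of_forall fun x => (tendsto_max_neg_min (f x)).mul (tendsto_max_neg_min (g x)))
  exact le_of_tendsto_of_tendsto' (hF_lim.mul hG_lim) hFG_lim hFG

end MeasureTheory.Measure

theorem independent_implies_associated_general
    {Ω : Type*} [MeasurableSpace Ω] (P : Measure Ω)
    {n : ℕ} (X : Fin n → Ω → ℝ) (hXmeas : ∀ i, Measurable (X i))
    (hindep : iIndepFun X P)
    (h g : (Fin n → ℝ) → ℝ) (hh : Monotone h) (hg : Monotone g)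
    (hhm : Measurable h) (hgm : Measurable g)
    (hh2 : MemLp (fun ω => h fun i => X i ω) 2 P)
    (hg2 : MemLp (fun ω => g fun i => X i ω) 2 P) :
    0 ≤ (∫ ω, h (fun i => X i ω) * g (fun i => X i ω) ∂P)
        - (∫ ω, h (fun i => X i ω) ∂P) * (∫ ω, g (fun i => X i ω) ∂P) := by
  have := hindep.isProbabilityMeasure
  have hXm : Measurable fun ω i => X i ω := measurable_pi_lambda _ hXmeas
  have : ∀ i, IsProbabilityMeasure (P.map (X i)) := fun i =>
    Measure.isProbabilityMeasure_map (hXmeas i).aemeasurable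
  have hlaw : (P.map fun ω i => X i ω).IsAssociated := by
    rw [hindep.map_fun_eq_pi_map fun i => (hXmeas i).aemeasurable]
    exact Measure.IsAssociated.pi fun i => Measure.isAssociated_of_linearOrder _
  have := Measure.isProbabilityMeasure_map (μ := P) hXm.aemeasurable
  have hcov := hlaw.integral_mul_integral_le_of_memLp hh hg hhm hgm
    ((memLp_map_measure_iff hhm.aestronglyMeasurable hXm.aemeasurable).2 hh2)
    ((memLp_map_measure_iff hgm.aestronglyMeasurable hXm.aemeasurable).2 hg2)
  rw [integral_map hXm.aemeasurable hhm.aestronglyMeasurable,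
    integral_map hXm.aemeasurable hgm.aestronglyMeasurable,
    integral_map (f := fun x => h x * g x) hXm.aemeasurable (hhm.mul hgm).aestronglyMeasurable]
    at hcov
  exact sub_nonneg.2 hcov

theorem independent_implies_associated
    {Ω : Type*} [MeasurableSpace Ω] (P : Measure Ω) [IsProbabilityMeasure P]
    {n : ℕ} (X : Fin n → Ω → ℝ) (hXmeas : ∀ i, Measurable (X i))
    (hindep : iIndepFun X P)
    (h g : (Fin n → ℝ) → ℝ) (hh : Monotone h) (hg : Monotone g)
    (hhm : Measurable h) (hgm : Measurable g)
    (hh2 : MemLp (fun ω => h fun i => X i ω) 2 P)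
    (hg2 : MemLp (fun ω => g fun i => X i ω) 2 P) :
    0 ≤ (∫ ω, h (fun i => X i ω) * g (fun i => X i ω) ∂P)
        - (∫ ω, h (fun i => X i ω) ∂P) * (∫ ω, g (fun i => X i ω) ∂P) :=
  independent_implies_associated_general P X hXmeas hindep h g hh hg hhm hgm hh2 hg2
end

section
/- Let X₁,…,Xₙ be square-integrable associated random variables. Then for real numbers r₁,…,rₙ, the joint characteristic function φ(r) = E[exp(i∑ⱼ rⱼXⱼ)] and the marginal characteristic functions φⱼ(rⱼ) = E[exp(i rⱼXⱼ)] satisfy |φ(r) − ∏ⱼ φⱼ(rⱼ)| ≤ 2 ∑_{1≤k<l≤n} |r_k||r_l| Cov(X_k, X_l). -/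
/-!
Let `S` and `T` be linear combinations `∑ r_j X_j` over two blocks of indices. Multiplying
`E e^{i(S+T)} - E e^{iS} E e^{iT}` by a phase `e^{ia}` and taking real parts gives
`cov(cos(S+a), cos T) - cov(sin(S+a), sin T)`, and the norm is the supremum of this over `a`.
For a 1-Lipschitz `F` both `x ↦ ∑ |r_j| x_j ± F (∑ r_j x_j)` are coordinatewise non-decreasing,
so association bounds `|cov(F(S), G(T))|` by `cov(∑ |r_i| X_i, ∑ |r_j| X_j)
= ∑ |r_i| |r_j| cov(X_i, X_j)`. Splitting off the largest index one at a time, the errors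
telescope, since characteristic functions have norm at most `1`.
-/

open MeasureTheory

/-- Association of a finite collection of real random variables. -/
def AssociatedRVs {Ω : Type*} [MeasurableSpace Ω] (P : Measure Ω)
    {n : ℕ} (X : Fin n → Ω → ℝ) : Prop :=
  ∀ h g : (Fin n → ℝ) → ℝ, Monotone h → Monotone g → Measurable h → Measurable g →
    MemLp (fun ω => h fun i => X i ω) 2 P →
    MemLp (fun ω => g fun i => X i ω) 2 P →
    0 ≤ (∫ ω, h (fun i => X i ω) * g (fun i => X i ω) ∂P)
        - (∫ ω, h (fun i => X i ω) ∂P) * (∫ ω, g (fun i => X i ω) ∂P)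

open ProbabilityTheory Complex

lemma monotone_add_mul_of_abs_sub_le {α : Type*} [Preorder α] {L h : α → ℝ}
    (hLh : ∀ x y, x ≤ y → |h y - h x| ≤ L y - L x) {s : ℝ} (hs : |s| ≤ 1) :
    Monotone fun x => L x + s * h x := by
  intro x y hxy
  have hsh : |s * (h y - h x)| ≤ |h y - h x| := by
    rw [abs_mul]; exact mul_le_of_le_one_left (abs_nonneg _) hs
  linarith [hLh x y hxy, neg_abs_le (s * (h y - h x))]

lemma abs_comp_sum_mul_sub_le {ι : Type*} {F : ℝ → ℝ} (hF : LipschitzWith 1 F) (A : Finset ι)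
    (r : ι → ℝ) {x y : ι → ℝ} (hxy : x ≤ y) :
    |F (∑ i ∈ A, r i * y i) - F (∑ i ∈ A, r i * x i)|
      ≤ ∑ i ∈ A, |r i| * y i - ∑ i ∈ A, |r i| * x i := by
  calc |F (∑ i ∈ A, r i * y i) - F (∑ i ∈ A, r i * x i)|
      ≤ |∑ i ∈ A, r i * y i - ∑ i ∈ A, r i * x i| := by
        simpa [Real.dist_eq] using hF.dist_le_mul (∑ i ∈ A, r i * y i) (∑ i ∈ A, r i * x i)
    _ = |∑ i ∈ A, r i * (y i - x i)| := by simp only [mul_sub, Finset.sum_sub_distrib]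
    _ ≤ ∑ i ∈ A, |r i * (y i - x i)| := Finset.abs_sum_le_sum_abs _ _
    _ = ∑ i ∈ A, |r i| * y i - ∑ i ∈ A, |r i| * x i := by
        rw [← Finset.sum_sub_distrib]
        refine Finset.sum_congr rfl fun i _ => ?_
        rw [abs_mul, abs_of_nonneg (sub_nonneg.2 (hxy i)), mul_sub]

lemma norm_le_of_forall_re_exp_mul_le {z : ℂ} {c : ℝ} (h : ∀ a : ℝ, (exp (a * I) * z).re ≤ c) :
    ‖z‖ ≤ c := by
  have hrot : exp (↑(-z.arg) * I) * z = ‖z‖ := by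
    nth_rewrite 2 [← norm_mul_exp_arg_mul_I z]
    rw [mul_left_comm, ← Complex.exp_add, ofReal_neg, neg_mul, neg_add_cancel, Complex.exp_zero,
      mul_one]
  have := h (-z.arg)
  rwa [hrot, ofReal_re] at this

section Integrals

variable {Ω : Type*} [MeasurableSpace Ω] {P : Measure Ω}

lemma covariance_add_mul_add_mul [IsFiniteMeasure P] {A B C D : Ω → ℝ}
    (hA : MemLp A 2 P) (hB : MemLp B 2 P) (hC : MemLp C 2 P) (hD : MemLp D 2 P) (s t : ℝ) :
    cov[fun ω => A ω + s * B ω, fun ω => C ω + t * D ω; P]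
      = cov[A, C; P] + t * cov[A, D; P] + s * cov[B, C; P] + s * t * cov[B, D; P] := by
  change cov[A + fun ω => s * B ω, C + fun ω => t * D ω; P] = _
  rw [covariance_add_left hA (hB.const_mul s) (hC.add (hD.const_mul t)),
    covariance_add_right hA hC (hD.const_mul t), covariance_add_right (hB.const_mul s) hC
      (hD.const_mul t), covariance_const_mul_right, covariance_const_mul_left,
    covariance_const_mul_left, covariance_const_mul_right]
  ring

lemma memLp_comp_of_lipschitzWith [IsFiniteMeasure P] {F : ℝ → ℝ} {K : NNReal} {p : ENNReal}
    (hF : LipschitzWith K F) {f : Ω → ℝ} (hf : MemLp f p P) : MemLp (fun ω => F (f ω)) p P := by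
  have hbound : MemLp (fun ω => |F 0| + K * ‖f ω‖) p P :=
    (memLp_const |F 0|).add (hf.norm.const_mul (K : ℝ))
  refine hbound.of_le (hF.continuous.comp_aestronglyMeasurable hf.1) (ae_of_all _ fun ω => ?_)
  have h := hF.dist_le_mul (f ω) 0
  simp only [Real.dist_eq, sub_zero, Real.norm_eq_abs] at h ⊢
  refine le_trans ?_ (le_abs_self _)
  linarith [abs_sub_abs_le_abs_sub (F (f ω)) (F 0)]

lemma memLp_sum_mul {ι : Type*} {X : ι → Ω → ℝ} {p : ENNReal} (hX : ∀ i, MemLp (X i) p P)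
    (A : Finset ι) (c : ι → ℝ) : MemLp (fun ω => ∑ i ∈ A, c i * X i ω) p P :=
  memLp_finsetSum A fun i _ => (hX i).const_mul (c i)

lemma covariance_sum_mul_sum_mul [IsFiniteMeasure P] {ι : Type*} {X : ι → Ω → ℝ}
    (hX2 : ∀ i, MemLp (X i) 2 P) (A B : Finset ι) (c d : ι → ℝ) :
    cov[fun ω => ∑ i ∈ A, c i * X i ω, fun ω => ∑ j ∈ B, d j * X j ω; P]
      = ∑ i ∈ A, ∑ j ∈ B, c i * d j * cov[X i, X j; P] := by
  rw [covariance_fun_sum_fun_sum' (X := fun i ω => c i * X i ω) (Y := fun j ω => d j * X j ω)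
    (fun i _ => (hX2 i).const_mul _) (fun j _ => (hX2 j).const_mul _)]
  simp only [covariance_const_mul_left, covariance_const_mul_right, mul_left_comm, mul_assoc]

lemma integrable_cexp_I_mul [IsFiniteMeasure P] {V : Ω → ℝ} (hV : Measurable V) :
    Integrable (fun ω => exp (I * V ω)) P :=
  Integrable.of_bound (by fun_prop) 1 (ae_of_all _ fun ω => by
    rw [mul_comm, norm_exp_ofReal_mul_I])

lemma norm_integral_cexp_I_mul_le_one [IsProbabilityMeasure P] (V : Ω → ℝ) :
    ‖∫ ω, exp (I * V ω) ∂P‖ ≤ 1 := by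
  simpa using norm_integral_le_of_norm_le_const (μ := P) (C := 1) (ae_of_all _ fun ω => by
    rw [mul_comm, norm_exp_ofReal_mul_I])

lemma exp_mul_I_mul_integral_cexp_I_mul (V : Ω → ℝ) (a : ℝ) :
    exp (a * I) * ∫ ω, exp (I * V ω) ∂P = ∫ ω, exp (I * ↑(V ω + a)) ∂P := by
  rw [← integral_const_mul]
  congr 1 with ω
  rw [← Complex.exp_add]
  push_cast
  ring_nf

lemma re_integral_cexp_I_mul [IsFiniteMeasure P] {V : Ω → ℝ} (hV : Measurable V) :
    (∫ ω, exp (I * V ω) ∂P).re = ∫ ω, Real.cos (V ω) ∂P := by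
  rw [← RCLike.re_to_complex, ← integral_re (integrable_cexp_I_mul hV)]
  simp [mul_comm I, exp_ofReal_mul_I_re]

lemma im_integral_cexp_I_mul [IsFiniteMeasure P] {V : Ω → ℝ} (hV : Measurable V) :
    (∫ ω, exp (I * V ω) ∂P).im = ∫ ω, Real.sin (V ω) ∂P := by
  rw [← RCLike.im_to_complex, ← integral_im (integrable_cexp_I_mul hV)]
  simp [mul_comm I, exp_ofReal_mul_I_im]

lemma memLp_of_abs_le_one [IsFiniteMeasure P] {f : Ω → ℝ} {p : ENNReal} (hf : Measurable f)
    (h : ∀ ω, |f ω| ≤ 1) : MemLp f p P :=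
  MemLp.of_bound hf.aestronglyMeasurable 1 (ae_of_all _ h)

lemma re_integral_cexp_add_sub_mul [IsProbabilityMeasure P] {U T : Ω → ℝ}
    (hU : Measurable U) (hT : Measurable T) :
    ((∫ ω, exp (I * ↑(U ω + T ω)) ∂P) - (∫ ω, exp (I * U ω) ∂P) * ∫ ω, exp (I * T ω) ∂P).re
      = cov[fun ω => Real.cos (U ω), fun ω => Real.cos (T ω); P]
        - cov[fun ω => Real.sin (U ω), fun ω => Real.sin (T ω); P] := by
  have hcU : MemLp (fun ω => Real.cos (U ω)) 2 P :=
    memLp_of_abs_le_one hU.cos fun _ => Real.abs_cos_le_one _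
  have hsU : MemLp (fun ω => Real.sin (U ω)) 2 P :=
    memLp_of_abs_le_one hU.sin fun _ => Real.abs_sin_le_one _
  have hcT : MemLp (fun ω => Real.cos (T ω)) 2 P :=
    memLp_of_abs_le_one hT.cos fun _ => Real.abs_cos_le_one _
  have hsT : MemLp (fun ω => Real.sin (T ω)) 2 P :=
    memLp_of_abs_le_one hT.sin fun _ => Real.abs_sin_le_one _
  rw [sub_re, mul_re, re_integral_cexp_I_mul (V := fun ω => U ω + T ω) (hU.add hT),
    re_integral_cexp_I_mul hU, re_integral_cexp_I_mul hT, im_integral_cexp_I_mul hU,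
    im_integral_cexp_I_mul hT,
    covariance_eq_sub hcU hcT, covariance_eq_sub hsU hsT]
  simp only [Real.cos_add, Pi.mul_apply]
  rw [integral_sub (f := fun ω => Real.cos (U ω) * Real.cos (T ω))
    (g := fun ω => Real.sin (U ω) * Real.sin (T ω)) (hcU.integrable_mul hcT)
    (hsU.integrable_mul hsT)]
  ring

end Integrals

namespace AssociatedRVs

variable {Ω : Type*} [MeasurableSpace Ω] {P : Measure Ω} [IsProbabilityMeasure P] {n : ℕ}
  {X : Fin n → Ω → ℝ}

lemma covariance_nonneg (hX : AssociatedRVs P X) {h g : (Fin n → ℝ) → ℝ}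
    (hh : Monotone h) (hg : Monotone g) (hhm : Measurable h) (hgm : Measurable g)
    (hh2 : MemLp (fun ω => h fun i => X i ω) 2 P) (hg2 : MemLp (fun ω => g fun i => X i ω) 2 P) :
    0 ≤ cov[fun ω => h fun i => X i ω, fun ω => g fun i => X i ω; P] := by
  rw [covariance_eq_sub hh2 hg2]
  exact hX h g hh hg hhm hgm hh2 hg2

lemma abs_covariance_le (hX : AssociatedRVs P X) {h g L M : (Fin n → ℝ) → ℝ}
    (hhm : Measurable h) (hgm : Measurable g) (hLm : Measurable L) (hMm : Measurable M)
    (hh2 : MemLp (fun ω => h fun i => X i ω) 2 P) (hg2 : MemLp (fun ω => g fun i => X i ω) 2 P)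
    (hL2 : MemLp (fun ω => L fun i => X i ω) 2 P) (hM2 : MemLp (fun ω => M fun i => X i ω) 2 P)
    (hLh : ∀ x y, x ≤ y → |h y - h x| ≤ L y - L x)
    (hMg : ∀ x y, x ≤ y → |g y - g x| ≤ M y - M x) :
    |cov[fun ω => h fun i => X i ω, fun ω => g fun i => X i ω; P]|
      ≤ cov[fun ω => L fun i => X i ω, fun ω => M fun i => X i ω; P] := by
  have key : ∀ s t : ℝ, |s| ≤ 1 → |t| ≤ 1 →
      0 ≤ cov[fun ω => L (fun i => X i ω) + s * h (fun i => X i ω),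
        fun ω => M (fun i => X i ω) + t * g (fun i => X i ω); P] := fun s t hs ht =>
    hX.covariance_nonneg (h := fun x => L x + s * h x) (g := fun x => M x + t * g x)
      (monotone_add_mul_of_abs_sub_le hLh hs) (monotone_add_mul_of_abs_sub_le hMg ht)
      (hLm.add (hhm.const_mul s)) (hMm.add (hgm.const_mul t))
      (hL2.add (hh2.const_mul s)) (hM2.add (hg2.const_mul t))
  have hpp := key 1 1 (by simp) (by simp)
  have hmm := key (-1) (-1) (by simp) (by simp)
  have hpm := key 1 (-1) (by simp) (by simp)
  have hmp := key (-1) 1 (by simp) (by simp)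
  simp only [covariance_add_mul_add_mul hL2 hh2 hM2 hg2] at hpp hmm hpm hmp
  rw [abs_le]
  constructor <;> linarith

lemma abs_covariance_comp_sum_le (hX : AssociatedRVs P X) (hX2 : ∀ i, MemLp (X i) 2 P)
    {F G : ℝ → ℝ} (hF : LipschitzWith 1 F) (hG : LipschitzWith 1 G) (r : Fin n → ℝ)
    (A B : Finset (Fin n)) :
    |cov[fun ω => F (∑ i ∈ A, r i * X i ω), fun ω => G (∑ j ∈ B, r j * X j ω); P]|
      ≤ ∑ i ∈ A, ∑ j ∈ B, |r i| * |r j| * cov[X i, X j; P] := by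
  rw [← covariance_sum_mul_sum_mul hX2]
  exact hX.abs_covariance_le (h := fun x => F (∑ i ∈ A, r i * x i))
    (g := fun x => G (∑ j ∈ B, r j * x j)) (L := fun x => ∑ i ∈ A, |r i| * x i)
    (M := fun x => ∑ j ∈ B, |r j| * x j) (hF.continuous.measurable.comp (by fun_prop))
    (hG.continuous.measurable.comp (by fun_prop)) (by fun_prop) (by fun_prop)
    (memLp_comp_of_lipschitzWith hF (memLp_sum_mul hX2 A r))
    (memLp_comp_of_lipschitzWith hG (memLp_sum_mul hX2 B r))
    (memLp_sum_mul hX2 A _) (memLp_sum_mul hX2 B _)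
    (fun _ _ => abs_comp_sum_mul_sub_le hF A r) (fun _ _ => abs_comp_sum_mul_sub_le hG B r)

lemma norm_integral_cexp_add_sub_mul_le (hX : AssociatedRVs P X) (hXm : ∀ i, Measurable (X i))
    (hX2 : ∀ i, MemLp (X i) 2 P) (r : Fin n → ℝ) (A B : Finset (Fin n)) :
    ‖(∫ ω, exp (I * ↑(∑ i ∈ A, r i * X i ω + ∑ j ∈ B, r j * X j ω)) ∂P)
        - (∫ ω, exp (I * ↑(∑ i ∈ A, r i * X i ω)) ∂P)
          * ∫ ω, exp (I * ↑(∑ j ∈ B, r j * X j ω)) ∂P‖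
      ≤ 2 * ∑ i ∈ A, ∑ j ∈ B, |r i| * |r j| * cov[X i, X j; P] := by
  refine norm_le_of_forall_re_exp_mul_le fun a => ?_
  have hrot : exp (a * I) * ((∫ ω, exp (I * ↑(∑ i ∈ A, r i * X i ω + ∑ j ∈ B, r j * X j ω)) ∂P)
        - (∫ ω, exp (I * ↑(∑ i ∈ A, r i * X i ω)) ∂P)
          * ∫ ω, exp (I * ↑(∑ j ∈ B, r j * X j ω)) ∂P)
      = (∫ ω, exp (I * ↑((∑ i ∈ A, r i * X i ω + a) + ∑ j ∈ B, r j * X j ω)) ∂P)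
        - (∫ ω, exp (I * ↑(∑ i ∈ A, r i * X i ω + a)) ∂P)
          * ∫ ω, exp (I * ↑(∑ j ∈ B, r j * X j ω)) ∂P := by
    rw [mul_sub, ← mul_assoc, exp_mul_I_mul_integral_cexp_I_mul,
      exp_mul_I_mul_integral_cexp_I_mul]
    simp_rw [add_right_comm]
  have hcos := hX.abs_covariance_comp_sum_le hX2 (F := fun u => Real.cos (u + a))
    (by simpa [Function.comp_def] using
      Real.lipschitzWith_cos.comp (isometry_add_right a).lipschitz)
    Real.lipschitzWith_cos r A B
  have hsin := hX.abs_covariance_comp_sum_le hX2 (F := fun u => Real.sin (u + a))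
    (by simpa [Function.comp_def] using
      Real.lipschitzWith_sin.comp (isometry_add_right a).lipschitz)
    Real.lipschitzWith_sin r A B
  rw [hrot, re_integral_cexp_add_sub_mul (by fun_prop) (by fun_prop)]
  linarith [abs_le.1 hcos, abs_le.1 hsin]

lemma norm_integral_cexp_sum_sub_prod_le (hX : AssociatedRVs P X) (hXm : ∀ i, Measurable (X i))
    (hX2 : ∀ i, MemLp (X i) 2 P) (r : Fin n → ℝ) (S : Finset (Fin n)) :
    ‖(∫ ω, exp (I * ↑(∑ j ∈ S, r j * X j ω)) ∂P) - ∏ j ∈ S, ∫ ω, exp (I * ↑(r j * X j ω)) ∂P‖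
      ≤ 2 * ∑ p ∈ (S ×ˢ S).filter (fun p => p.1 < p.2),
          |r p.1| * |r p.2| * cov[X p.1, X p.2; P] := by
  induction S using Finset.induction_on_max with
  | empty => simp
  | insert a S haS ih =>
    have ha : a ∉ S := fun h => lt_irrefl a (haS a h)
    have hpairs : (insert a S ×ˢ insert a S).filter (fun p => p.1 < p.2)
        = (S ×ˢ S).filter (fun p => p.1 < p.2) ∪ S ×ˢ {a} := by
      ext ⟨i, j⟩
      simp only [Finset.mem_filter, Finset.mem_product, Finset.mem_insert, Finset.mem_union,
        Finset.mem_singleton]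
      grind
    have hdisj : Disjoint ((S ×ˢ S).filter (fun p => p.1 < p.2)) (S ×ˢ {a}) := by
      simp only [Finset.disjoint_left, Finset.mem_filter, Finset.mem_product,
        Finset.mem_singleton]
      grind
    have hpair := hX.norm_integral_cexp_add_sub_mul_le hXm hX2 r S {a}
    simp only [Finset.sum_singleton] at hpair
    have hsum : ∀ ω, ∑ j ∈ insert a S, r j * X j ω = ∑ j ∈ S, r j * X j ω + r a * X a ω :=
      fun ω => by rw [Finset.sum_insert ha, add_comm]
    simp only [hsum, Finset.prod_insert ha, hpairs, Finset.sum_union hdisj, Finset.sum_product,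
      Finset.sum_singleton, mul_add]
    set φS := ∫ ω, exp (I * ↑(∑ j ∈ S, r j * X j ω)) ∂P
    set ψa := ∫ ω, exp (I * ↑(r a * X a ω)) ∂P
    calc _ = ‖((∫ ω, exp (I * ↑(∑ j ∈ S, r j * X j ω + r a * X a ω)) ∂P) - φS * ψa)
            + (φS - ∏ j ∈ S, ∫ ω, exp (I * ↑(r j * X j ω)) ∂P) * ψa‖ := by congr 1; ring
      _ ≤ ‖(∫ ω, exp (I * ↑(∑ j ∈ S, r j * X j ω + r a * X a ω)) ∂P) - φS * ψa‖
            + ‖φS - ∏ j ∈ S, ∫ ω, exp (I * ↑(r j * X j ω)) ∂P‖ := by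
          refine (norm_add_le _ _).trans (add_le_add_right ?_ _)
          rw [norm_mul]
          exact mul_le_of_le_one_right (norm_nonneg _) (norm_integral_cexp_I_mul_le_one _)
      _ ≤ _ := by linarith

end AssociatedRVs

/-- Newman's inequality for characteristic functions of associated random variables. -/
theorem newman_characteristic_function_inequality
    {Ω : Type*} [MeasurableSpace Ω] (P : Measure Ω) [IsProbabilityMeasure P]
    {n : ℕ} (X : Fin n → Ω → ℝ) (hXmeas : ∀ i, Measurable (X i))
    (hassoc : AssociatedRVs P X) (hX2 : ∀ i, MemLp (X i) 2 P) (r : Fin n → ℝ) :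
    ‖(∫ ω, Complex.exp (Complex.I * ((∑ j, r j * X j ω : ℝ) : ℂ)) ∂P)
        - ∏ j, ∫ ω, Complex.exp (Complex.I * ((r j * X j ω : ℝ) : ℂ)) ∂P‖
      ≤ 2 * ∑ p ∈ Finset.univ.filter (fun p : Fin n × Fin n => p.1 < p.2),
          |r p.1| * |r p.2| *
            ((∫ ω, X p.1 ω * X p.2 ω ∂P)
              - (∫ ω, X p.1 ω ∂P) * (∫ ω, X p.2 ω ∂P)) := by
  have hcov : ∀ i j, cov[X i, X j; P]
      = (∫ ω, X i ω * X j ω ∂P) - (∫ ω, X i ω ∂P) * (∫ ω, X j ω ∂P) :=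
    fun i j => covariance_eq_sub (hX2 i) (hX2 j)
  simpa only [Finset.univ_product_univ, hcov] using
    hassoc.norm_integral_cexp_sum_sub_prod_le hXmeas hX2 r Finset.univ
end

section
/- For the Deshpande kernel with 0 < b < 1 and exponential F, the projection variance equals ξ₁ = Var(ρ₁(X₁)) = (1/4)·{1 + b/(2+b) + 1/(2b+1) + 2(1−b)/(1+b) − 2b/(1+b+b²) − 4/(b+1)²}. -/
/-!
Expanding the square, `ρ₁(x)² e^{-x}` is a linear combination of six exponentials `e^{-c x}`
with `c > 0`, and each of them integrates to `1 / c` over `(0, ∞)`; what is left is an identity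
of rational functions of `b`.
-/

open MeasureTheory Real Set

theorem integral_Ioi_zero_sum_mul_exp {ι : Type*} (s : Finset ι) (a r : ι → ℝ)
    (hr : ∀ i ∈ s, r i < 0) :
    ∫ x in Ioi (0 : ℝ), ∑ i ∈ s, a i * exp (r i * x) = ∑ i ∈ s, -a i / r i := by
  rw [integral_finsetSum s fun i hi => (integrableOn_exp_mul_Ioi (hr i hi) 0).const_mul (a i)]
  refine Finset.sum_congr rfl fun i hi => ?_
  rw [integral_const_mul, integral_exp_mul_Ioi (hr i hi), mul_zero, exp_zero, neg_div, mul_neg,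
    mul_one_div, neg_div]

theorem deshpande_sq_mul_exp_neg_eq_sum (b x : ℝ) :
    ((exp (-(b * x)) + 1 - exp (-(x / b))) / 2) ^ 2 * exp (-x) =
      ∑ i : Fin 6, ![1 / 4, 1 / 4, 1 / 4, 1 / 2, -1 / 2, -1 / 2] i *
        exp (![-(2 * b + 1), -1, -(2 / b + 1), -(b + 1), -(b + b⁻¹ + 1), -(b⁻¹ + 1)] i * x) := by
  simp only [Fin.sum_univ_succ, Fin.sum_univ_zero, Matrix.cons_val_zero, Matrix.cons_val_succ]
  ring_nf
  simp only [sq, ← exp_add]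
  ring_nf

theorem deshpande_projection_variance_general (b : ℝ) (hb0 : 0 < b)
    (ρ₁ : ℝ → ℝ)
    (hρ₁ : ∀ x : ℝ, ρ₁ x = (Real.exp (-(b * x)) + 1 - Real.exp (-(x / b))) / 2) :
    (∫ x in Set.Ioi (0 : ℝ), (ρ₁ x) ^ 2 * Real.exp (-x)) - (1 / (b + 1)) ^ 2
      = (1 / 4) * (1 + b / (2 + b) + 1 / (2 * b + 1) + 2 * (1 - b) / (1 + b)
          - 2 * b / (1 + b + b ^ 2) - 4 / (b + 1) ^ 2) := by
  simp_rw [hρ₁, deshpande_sq_mul_exp_neg_eq_sum]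
  rw [integral_Ioi_zero_sum_mul_exp _ _ _ fun i _ => by
    fin_cases i <;>
      simp only [Fin.zero_eta, Fin.mk_one, Fin.reduceFinMk, Matrix.cons_val, neg_lt_zero] <;>
      positivity]
  simp only [Fin.sum_univ_succ, Fin.sum_univ_zero, Matrix.cons_val_zero, Matrix.cons_val_succ]
  have : 1 + b + b ^ 2 ≠ 0 := by positivity
  field_simp
  ring

/-- Projection variance of the Deshpande kernel under the standard exponential distribution. -/
theorem deshpande_projection_variance (b : ℝ) (hb0 : 0 < b) (hb1 : b < 1)
    (ρ₁ : ℝ → ℝ)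
    (hρ₁ : ∀ x : ℝ, ρ₁ x = (Real.exp (-(b * x)) + 1 - Real.exp (-(x / b))) / 2) :
    (∫ x in Set.Ioi (0 : ℝ), (ρ₁ x) ^ 2 * Real.exp (-x)) - (1 / (b + 1)) ^ 2
      = (1 / 4) * (1 + b / (2 + b) + 1 / (2 * b + 1) + 2 * (1 - b) / (1 + b)
          - 2 * b / (1 + b + b ^ 2) - 4 / (b + 1) ^ 2) :=
  deshpande_projection_variance_general b hb0 ρ₁ hρ₁
end

section
/- For the Ahmad kernel ρ(x₁,x₂) = (1/2)[(3x₁−x₂)1{x₂>x₁} + (3x₂−x₁)1{x₁>x₂}] and X₁, X₂ i.i.d. exponential with mean μ, one has E[ρ(X₁,X₂)] = 0 and Var(ρ₁(X₁)) = μ²/12, so that the i.i.d. asymptotic variance of √n·δ_{F_n} equals 4·μ²/12 = μ²/3. -/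
/-!
Everything reduces to two families of elementary integrals: the moments
`∫₀^∞ xⁿ e^{-kx/μ} dx = n! (μ/k)^{n+1}` (Gamma function) and the tails
`∫_c^∞ (p + q y) e^{-y/μ} dy = μ (p + q (c + μ)) e^{-c/μ}` (explicit antiderivative).
For fixed `x > 0` the kernel equals `(3y - x)/2`, corrected by `2(x - y)` for `y > x`, so the
tail formula gives `E ρ(x, X₂) = 3μ/2 - x/2 - 2μ e^{-x/μ}`; the same formula evaluates the given
`ρ₁`, so `E ρ(X₁, X₂) = E ρ₁(X₁)`. Both `ρ₁` and `ρ₁²` times the density are polynomials in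
`x` and `e^{-x/μ}`, whose moments give `E ρ₁ = 0` and `E ρ₁² = μ²/12`.
-/
open Real Set Filter MeasureTheory Topology

section ExponentialIntegrals

theorem integral_pow_mul_exp_neg_mul_Ioi (n : ℕ) {b : ℝ} (hb : 0 < b) :
    ∫ x in Ioi (0 : ℝ), x ^ n * exp (-(b * x)) = n.factorial / b ^ (n + 1) := by
  have h := integral_rpow_mul_exp_neg_mul_Ioi (a := n + 1) (by positivity) hb
  simp_rw [add_sub_cancel_right, rpow_natCast, Gamma_nat_eq_factorial, one_div,
    inv_rpow hb.le, ← Nat.cast_succ, rpow_natCast] at h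
  rw [h, div_eq_inv_mul]

theorem exp_neg_div_pow (x μ : ℝ) (k : ℕ) : exp (-x / μ) ^ k = exp (-(k / μ * x)) := by
  rw [← exp_nat_mul]
  ring_nf

variable {μ : ℝ}

theorem integral_pow_mul_exp_neg_div_pow_Ioi (n : ℕ) {k : ℕ} (hk : k ≠ 0) (hμ : 0 < μ) :
    ∫ x in Ioi (0 : ℝ), x ^ n * exp (-x / μ) ^ k = n.factorial * (μ / k) ^ (n + 1) := by
  simp_rw [exp_neg_div_pow, integral_pow_mul_exp_neg_mul_Ioi n (by positivity : (0:ℝ) < k / μ),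
    div_eq_mul_inv, ← inv_pow, mul_inv, inv_inv, mul_comm]

theorem integrableOn_pow_mul_exp_neg_div_pow_Ioi (n : ℕ) {k : ℕ} (hk : k ≠ 0) (hμ : 0 < μ)
    {c : ℝ} (hc : 0 ≤ c) : IntegrableOn (fun x => x ^ n * exp (-x / μ) ^ k) (Ioi c) :=
  IntegrableOn.mono_set (Integrable.of_integral_ne_zero (by
    rw [integral_pow_mul_exp_neg_div_pow_Ioi n hk hμ]; positivity)) (Ioi_subset_Ioi hc)

theorem integral_sum_mul_pow_mul_exp_neg_div_pow_Ioi {ι : Type*} (s : Finset ι) (c : ι → ℝ)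
    (n k : ι → ℕ) (hk : ∀ i ∈ s, k i ≠ 0) (hμ : 0 < μ) :
    ∫ x in Ioi (0 : ℝ), ∑ i ∈ s, c i * (x ^ n i * exp (-x / μ) ^ k i)
      = ∑ i ∈ s, c i * ((n i).factorial * (μ / k i) ^ (n i + 1)) := by
  rw [integral_finsetSum s fun i hi =>
    (integrableOn_pow_mul_exp_neg_div_pow_Ioi _ (hk i hi) hμ le_rfl).const_mul _]
  refine Finset.sum_congr rfl fun i hi => ?_
  rw [integral_const_mul, integral_pow_mul_exp_neg_div_pow_Ioi _ (hk i hi) hμ]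

theorem integrableOn_affine_mul_exp_neg_div_Ioi (p q : ℝ) (hμ : 0 < μ) {c : ℝ} (hc : 0 ≤ c) :
    IntegrableOn (fun y => (p + q * y) * exp (-y / μ)) (Ioi c) := by
  have h := ((integrableOn_pow_mul_exp_neg_div_pow_Ioi 0 one_ne_zero hμ hc).const_mul p).add
    ((integrableOn_pow_mul_exp_neg_div_pow_Ioi 1 one_ne_zero hμ hc).const_mul q)
  refine IntegrableOn.congr_fun h (fun y _ => ?_) measurableSet_Ioi
  simp only [Pi.add_apply, pow_zero, pow_one, one_mul]
  ring

theorem integral_affine_mul_exp_neg_div_Ioi (p q : ℝ) (hμ : 0 < μ) {c : ℝ} (hc : 0 ≤ c) :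
    ∫ y in Ioi c, (p + q * y) * exp (-y / μ) = μ * (p + q * (c + μ)) * exp (-c / μ) := by
  have hderiv : ∀ y ∈ Ici c, HasDerivAt (fun y => -μ * (p + q * (y + μ)) * exp (-y / μ))
      ((p + q * y) * exp (-y / μ)) y := by
    intro y _
    refine ((((hasDerivAt_id y).add_const μ).const_mul q).const_add p |>.const_mul (-μ) |>.mul
      ((hasDerivAt_id y).neg.div_const μ).exp).congr_deriv ?_
    simp only [Pi.neg_apply, id]
    field_simp
    ring
  have hlim : Tendsto (fun y => -μ * (p + q * (y + μ)) * exp (-y / μ)) atTop (𝓝 0) := by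
    have h n := (tendsto_pow_mul_exp_neg_atTop_nhds_zero n).comp (tendsto_id.atTop_div_const hμ)
    convert ((h 0).const_mul (-μ * (p + q * μ))).add ((h 1).const_mul (-μ ^ 2 * q)) using 1
    · ext y
      simp only [Function.comp_apply, id, neg_div]
      field_simp
      ring
    · simp
  rw [integral_Ioi_of_hasDerivAt_of_tendsto' hderiv
    (integrableOn_affine_mul_exp_neg_div_Ioi p q hμ hc) hlim]
  ring

end ExponentialIntegrals

noncomputable section

def ahmadKernel (x₁ x₂ : ℝ) : ℝ :=
  ((if x₂ > x₁ then 3 * x₁ - x₂ else 0) + (if x₁ > x₂ then 3 * x₂ - x₁ else 0)) / 2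

/-- The closed form of `ρ₁`, i.e. `x ↦ E ρ(x, X)` for `X` exponential with mean `μ`. -/
def ahmadProjection (μ x : ℝ) : ℝ := 3 * μ / 2 - x / 2 - 2 * μ * exp (-x / μ)

end

section AhmadKernel

variable {μ : ℝ}

theorem ahmadProjection_eq_tail_formula (hμ : 0 < μ) {x : ℝ} (hx : 0 ≤ x) :
    2 * x * exp (-x / μ) - x / 2 + 3 * μ / 2 - 2 * ∫ y in Ioi x, (y / μ) * exp (-y / μ)
      = ahmadProjection μ x := by
  have htail : ∫ y in Ioi x, (y / μ) * exp (-y / μ)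
      = ∫ y in Ioi x, (0 + μ⁻¹ * y) * exp (-y / μ) := by
    congr 1 with y
    ring
  rw [htail, integral_affine_mul_exp_neg_div_Ioi 0 μ⁻¹ hμ hx, ahmadProjection]
  field_simp
  ring

theorem ahmadKernel_mul_density_ae (μ : ℝ) {x : ℝ} :
    ∀ᵐ y, ahmadKernel x y * (μ⁻¹ * exp (-y / μ))
      = (-x / (2 * μ) + 3 / (2 * μ) * y) * exp (-y / μ)
        + (Ioi x).indicator (fun y => (2 * x / μ + -2 / μ * y) * exp (-y / μ)) y := by
  filter_upwards [Measure.ae_ne volume x] with y hyx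
  rcases hyx.lt_or_gt with hlt | hgt
  · rw [indicator_of_notMem (s := Ioi x) (not_lt.2 hlt.le), ahmadKernel,
      if_neg (not_lt.2 hlt.le), if_pos hlt]
    ring
  · rw [indicator_of_mem (s := Ioi x) hgt, ahmadKernel, if_pos hgt, if_neg (not_lt.2 hgt.le)]
    ring

theorem integral_ahmadKernel_mul_density (hμ : 0 < μ) {x : ℝ} (hx : 0 < x) :
    ∫ y in Ioi 0, ahmadKernel x y * (μ⁻¹ * exp (-y / μ)) = ahmadProjection μ x := by
  have hcorr := integrableOn_affine_mul_exp_neg_div_Ioi (2 * x / μ) (-2 / μ) hμ hx.le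
  rw [integral_congr_ae (ae_restrict_of_ae (ahmadKernel_mul_density_ae μ)),
    integral_add (integrableOn_affine_mul_exp_neg_div_Ioi _ _ hμ le_rfl)
      (hcorr.integrable_indicator measurableSet_Ioi).integrableOn,
    setIntegral_indicator measurableSet_Ioi, Ioi_inter_Ioi, sup_of_le_right hx.le,
    integral_affine_mul_exp_neg_div_Ioi _ _ hμ le_rfl,
    integral_affine_mul_exp_neg_div_Ioi _ _ hμ hx.le, ahmadProjection, neg_zero, zero_div,
    exp_zero]
  field_simp
  ring

theorem integral_ahmadProjection_mul_density (hμ : 0 < μ) :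
    ∫ x in Ioi 0, ahmadProjection μ x * (μ⁻¹ * exp (-x / μ)) = 0 := by
  have h := integral_sum_mul_pow_mul_exp_neg_div_pow_Ioi Finset.univ
    ![3 / 2, -1 / (2 * μ), -2] ![0, 1, 0] ![1, 1, 2] (by decide) hμ
  convert h using 1
  · congr 1 with x
    simp only [ahmadProjection, Fin.sum_univ_succ, Fin.sum_univ_zero, Matrix.cons_val_zero,
      Matrix.cons_val_succ]
    field_simp
    ring
  · simp only [Fin.sum_univ_succ, Fin.sum_univ_zero, Matrix.cons_val_zero, Matrix.cons_val_succ,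
      Nat.factorial]
    push_cast
    field_simp
    ring

theorem integral_ahmadProjection_sq_mul_density (hμ : 0 < μ) :
    ∫ x in Ioi 0, ahmadProjection μ x ^ 2 * (μ⁻¹ * exp (-x / μ)) = μ ^ 2 / 12 := by
  have h := integral_sum_mul_pow_mul_exp_neg_div_pow_Ioi Finset.univ
    ![9 * μ / 4, -3 / 2, 1 / (4 * μ), -6 * μ, 2, 4 * μ] ![0, 1, 2, 0, 1, 0] ![1, 1, 1, 2, 2, 3]
    (by decide) hμ
  convert h using 1
  · congr 1 with x
    simp only [ahmadProjection, Fin.sum_univ_succ, Fin.sum_univ_zero, Matrix.cons_val_zero,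
      Matrix.cons_val_succ]
    field_simp
    ring
  · simp only [Fin.sum_univ_succ, Fin.sum_univ_zero, Matrix.cons_val_zero, Matrix.cons_val_succ,
      Nat.factorial]
    push_cast
    field_simp
    ring

end AhmadKernel

/-- For the Ahmad kernel and i.i.d. exponentials with mean `μ`: the kernel has mean zero, the
projection variance equals `μ²/12`, and the i.i.d. asymptotic variance equals `μ²/3`. -/
theorem ahmad_kernel_exponential_moments (μ : ℝ) (hμ : 0 < μ)
    (φ : ℝ → ℝ → ℝ) (hφ : ∀ x₁ x₂, φ x₁ x₂ = if x₂ > x₁ then 3 * x₁ - x₂ else 0)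
    (ρ : ℝ → ℝ → ℝ) (hρ : ∀ x₁ x₂, ρ x₁ x₂ = (φ x₁ x₂ + φ x₂ x₁) / 2)
    (ρ₁ : ℝ → ℝ)
    (hρ₁ : ∀ x : ℝ, ρ₁ x = 2 * x * Real.exp (-x / μ) - x / 2 + 3 * μ / 2
        - 2 * ∫ y in Set.Ioi x, (y / μ) * Real.exp (-y / μ)) :
    (∫ x in Set.Ioi (0 : ℝ), ∫ y in Set.Ioi (0 : ℝ),
        ρ x y * (μ⁻¹ * Real.exp (-x / μ)) * (μ⁻¹ * Real.exp (-y / μ))) = 0 ∧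
    (∫ x in Set.Ioi (0 : ℝ), (ρ₁ x) ^ 2 * (μ⁻¹ * Real.exp (-x / μ)))
        - (∫ x in Set.Ioi (0 : ℝ), ρ₁ x * (μ⁻¹ * Real.exp (-x / μ))) ^ 2 = μ ^ 2 / 12 ∧
    4 * (μ ^ 2 / 12) = μ ^ 2 / 3 := by
  have hρ_eq : ρ = ahmadKernel := by
    ext x₁ x₂
    rw [hρ, hφ, hφ]
    rfl
  have hρ₁_eq : EqOn ρ₁ (ahmadProjection μ) (Ioi 0) := fun x hx => by
    rw [hρ₁, ahmadProjection_eq_tail_formula hμ (le_of_lt hx)]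
  have hmean : ∫ x in Ioi 0, ρ₁ x * (μ⁻¹ * exp (-x / μ)) = 0 :=
    (setIntegral_congr_fun measurableSet_Ioi fun x hx => by rw [hρ₁_eq hx]).trans
      (integral_ahmadProjection_mul_density hμ)
  have hsq : ∫ x in Ioi 0, ρ₁ x ^ 2 * (μ⁻¹ * exp (-x / μ)) = μ ^ 2 / 12 :=
    (setIntegral_congr_fun measurableSet_Ioi fun x hx => by rw [hρ₁_eq hx]).trans
      (integral_ahmadProjection_sq_mul_density hμ)
  refine ⟨?_, by rw [hsq, hmean]; ring, by ring⟩
  calc _ = ∫ x in Ioi 0, ahmadProjection μ x * (μ⁻¹ * exp (-x / μ)) := by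
        refine setIntegral_congr_fun measurableSet_Ioi fun x hx => ?_
        simp_rw [hρ_eq, mul_right_comm _ (μ⁻¹ * exp (-x / μ))]
        rw [integral_mul_const, integral_ahmadKernel_mul_density hμ hx]
    _ = 0 := integral_ahmadProjection_mul_density hμ
end

section
/- If X and Y are associated random variables and f, g : ℝ → ℝ satisfy f ≪ f̃ and g ≪ g̃ with f̃, g̃ non-decreasing, then |Cov(f(X), g(Y))| ≤ Cov(f̃(X), g̃(Y)) + Cov(f̃(X), g̃(Y)); in particular if f and g are Lipschitz with constant L then |Cov(f(X), g(Y))| ≤ L² Cov(X, Y). -/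
/-!
If `F ± f` and `G ± g` are non-decreasing, association of `(X, Y)` makes the four covariances
of `(F ± f)(X)` with `(G ± g)(Y)` non-negative. Expanding them bilinearly and adding them in
pairs gives `Cov(F(X), G(Y)) ± Cov(f(X), g(Y)) ≥ 0`. A function that is Lipschitz with constant
`L` is dominated in this sense by `x ↦ L x`, which gives the second bound.
-/

open MeasureTheory

/-- Covariance of two real random variables. -/
noncomputable def covRV {Ω : Type*} [MeasurableSpace Ω] (P : Measure Ω) (A B : Ω → ℝ) : ℝ :=
  (∫ ω, A ω * B ω ∂P) - (∫ ω, A ω ∂P) * (∫ ω, B ω ∂P)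

open ProbabilityTheory

section

variable {Ω : Type*} [MeasurableSpace Ω] {P : Measure Ω}

lemma covRV_eq_covariance [IsProbabilityMeasure P] {A B : Ω → ℝ} (hA : MemLp A 2 P)
    (hB : MemLp B 2 P) : covRV P A B = cov[A, B; P] :=
  (covariance_eq_sub hA hB).symm

lemma abs_covariance_le_of_nonneg_add_sub [IsFiniteMeasure P] {A B C D : Ω → ℝ}
    (hA : MemLp A 2 P) (hB : MemLp B 2 P) (hC : MemLp C 2 P) (hD : MemLp D 2 P)
    (hpp : 0 ≤ cov[A + B, C + D; P]) (hmm : 0 ≤ cov[A - B, C - D; P])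
    (hpm : 0 ≤ cov[A + B, C - D; P]) (hmp : 0 ≤ cov[A - B, C + D; P]) :
    |cov[B, D; P]| ≤ cov[A, C; P] := by
  rw [covariance_add_left hA hB (hC.add hD), covariance_add_right hA hC hD,
    covariance_add_right hB hC hD] at hpp
  rw [covariance_sub_sub hA hB hC hD] at hmm
  rw [covariance_add_left hA hB (hC.sub hD), covariance_sub_right hA hC hD,
    covariance_sub_right hB hC hD] at hpm
  rw [covariance_sub_left hA hB (hC.add hD), covariance_add_right hA hC hD,
    covariance_add_right hB hC hD] at hmp
  rw [abs_le]
  constructor <;> linarith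

/-- `f ≪ F` in the paper's notation. -/
def MonotonicallyDominated {α : Type*} [Preorder α] (f F : α → ℝ) : Prop :=
  Monotone (F + f) ∧ Monotone (F - f)

lemma LipschitzWith.monotonicallyDominated_const_mul {L : NNReal} {f : ℝ → ℝ}
    (hf : LipschitzWith L f) : MonotonicallyDominated f (fun x => (L : ℝ) * x) := by
  have hincr : ∀ ⦃a b : ℝ⦄, a ≤ b → |f b - f a| ≤ L * (b - a) := fun a b hab => by
    simpa [Real.dist_eq, abs_of_nonneg (sub_nonneg.2 hab)] using hf.dist_le_mul b a
  refine ⟨fun a b hab => ?_, fun a b hab => ?_⟩ <;>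
  · obtain ⟨hlow, hupp⟩ := abs_le.1 (hincr hab)
    simp only [Pi.add_apply, Pi.sub_apply]
    linarith

def AssociatedPair (P : Measure Ω) (X Y : Ω → ℝ) : Prop :=
  ∀ h k : ℝ × ℝ → ℝ, Monotone h → Monotone k → Measurable h → Measurable k →
    MemLp (fun ω => h (X ω, Y ω)) 2 P → MemLp (fun ω => k (X ω, Y ω)) 2 P →
    0 ≤ covRV P (fun ω => h (X ω, Y ω)) (fun ω => k (X ω, Y ω))

namespace AssociatedPair

variable [IsProbabilityMeasure P] {X Y : Ω → ℝ}

lemma covariance_comp_nonneg (hXY : AssociatedPair P X Y) {u v : ℝ → ℝ} (hu : Monotone u)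
    (hv : Monotone v) (hum : Measurable u) (hvm : Measurable v)
    (hu2 : MemLp (fun ω => u (X ω)) 2 P) (hv2 : MemLp (fun ω => v (Y ω)) 2 P) :
    0 ≤ cov[fun ω => u (X ω), fun ω => v (Y ω); P] := by
  rw [← covRV_eq_covariance hu2 hv2]
  exact hXY (fun p => u p.1) (fun p => v p.2) (fun p q hpq => hu hpq.1) (fun p q hpq => hv hpq.2)
    (hum.comp measurable_fst) (hvm.comp measurable_snd) hu2 hv2

lemma abs_covariance_comp_le (hXY : AssociatedPair P X Y) {f g F G : ℝ → ℝ}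
    (hfm : Measurable f) (hgm : Measurable g) (hFm : Measurable F) (hGm : Measurable G)
    (hf : MonotonicallyDominated f F) (hg : MonotonicallyDominated g G)
    (hf2 : MemLp (fun ω => f (X ω)) 2 P) (hg2 : MemLp (fun ω => g (Y ω)) 2 P)
    (hF2 : MemLp (fun ω => F (X ω)) 2 P) (hG2 : MemLp (fun ω => G (Y ω)) 2 P) :
    |cov[fun ω => f (X ω), fun ω => g (Y ω); P]|
      ≤ cov[fun ω => F (X ω), fun ω => G (Y ω); P] :=
  abs_covariance_le_of_nonneg_add_sub hF2 hf2 hG2 hg2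
    (hXY.covariance_comp_nonneg hf.1 hg.1 (hFm.add hfm) (hGm.add hgm) (hF2.add hf2)
      (hG2.add hg2))
    (hXY.covariance_comp_nonneg hf.2 hg.2 (hFm.sub hfm) (hGm.sub hgm) (hF2.sub hf2)
      (hG2.sub hg2))
    (hXY.covariance_comp_nonneg hf.1 hg.2 (hFm.add hfm) (hGm.sub hgm) (hF2.add hf2)
      (hG2.sub hg2))
    (hXY.covariance_comp_nonneg hf.2 hg.1 (hFm.sub hfm) (hGm.add hgm) (hF2.sub hf2)
      (hG2.add hg2))

end AssociatedPair

end

theorem covariance_bound_for_dominated_functions_general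
    {Ω : Type*} [MeasurableSpace Ω] (P : Measure Ω) [IsProbabilityMeasure P]
    (X Y : Ω → ℝ)
    (hassoc : ∀ h k : ℝ × ℝ → ℝ, Monotone h → Monotone k → Measurable h → Measurable k →
      MemLp (fun ω => h (X ω, Y ω)) 2 P → MemLp (fun ω => k (X ω, Y ω)) 2 P →
      0 ≤ covRV P (fun ω => h (X ω, Y ω)) (fun ω => k (X ω, Y ω)))
    (f g ftil gtil : ℝ → ℝ)
    (hfm : Measurable f) (hgm : Measurable g) (hftm : Measurable ftil) (hgtm : Measurable gtil)
    (hfadd : Monotone (ftil + f)) (hfsub : Monotone (ftil - f))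
    (hgadd : Monotone (gtil + g)) (hgsub : Monotone (gtil - g))
    (hf2 : MemLp (fun ω => f (X ω)) 2 P) (hg2 : MemLp (fun ω => g (Y ω)) 2 P)
    (hft2 : MemLp (fun ω => ftil (X ω)) 2 P) (hgt2 : MemLp (fun ω => gtil (Y ω)) 2 P) :
    |covRV P (fun ω => f (X ω)) (fun ω => g (Y ω))|
        ≤ covRV P (fun ω => ftil (X ω)) (fun ω => gtil (Y ω))
          + covRV P (fun ω => ftil (X ω)) (fun ω => gtil (Y ω)) ∧
    ∀ L : NNReal, LipschitzWith L f → LipschitzWith L g →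
      MemLp X 2 P → MemLp Y 2 P →
      |covRV P (fun ω => f (X ω)) (fun ω => g (Y ω))| ≤ (L : ℝ) ^ 2 * covRV P X Y := by
  have hXY : AssociatedPair P X Y := hassoc
  rw [covRV_eq_covariance hf2 hg2, covRV_eq_covariance hft2 hgt2]
  have hbound := hXY.abs_covariance_comp_le hfm hgm hftm hgtm ⟨hfadd, hfsub⟩ ⟨hgadd, hgsub⟩
    hf2 hg2 hft2 hgt2
  refine ⟨by linarith [(abs_nonneg _).trans hbound], fun L hLf hLg hX2 hY2 => ?_⟩
  calc |cov[fun ω => f (X ω), fun ω => g (Y ω); P]|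
      ≤ cov[fun ω => (L : ℝ) * X ω, fun ω => (L : ℝ) * Y ω; P] :=
        hXY.abs_covariance_comp_le hfm hgm (measurable_const_mul _) (measurable_const_mul _)
          hLf.monotonicallyDominated_const_mul hLg.monotonicallyDominated_const_mul hf2 hg2
          (hX2.const_mul _) (hY2.const_mul _)
    _ = (L : ℝ) ^ 2 * covRV P X Y := by
        rw [covariance_const_mul_left, covariance_const_mul_right, covRV_eq_covariance hX2 hY2]
        ring

/-- Covariance bound for functions of an associated pair dominated in the `≪` order, with the
Lipschitz consequence. -/
theorem covariance_bound_for_dominated_functions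
    {Ω : Type*} [MeasurableSpace Ω] (P : Measure Ω) [IsProbabilityMeasure P]
    (X Y : Ω → ℝ) (hX : Measurable X) (hY : Measurable Y)
    (hassoc : ∀ h k : ℝ × ℝ → ℝ, Monotone h → Monotone k → Measurable h → Measurable k →
      MemLp (fun ω => h (X ω, Y ω)) 2 P → MemLp (fun ω => k (X ω, Y ω)) 2 P →
      0 ≤ covRV P (fun ω => h (X ω, Y ω)) (fun ω => k (X ω, Y ω)))
    (f g ftil gtil : ℝ → ℝ)
    (hfm : Measurable f) (hgm : Measurable g) (hftm : Measurable ftil) (hgtm : Measurable gtil)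
    (hftil : Monotone ftil) (hgtil : Monotone gtil)
    (hfadd : Monotone (ftil + f)) (hfsub : Monotone (ftil - f))
    (hgadd : Monotone (gtil + g)) (hgsub : Monotone (gtil - g))
    (hf2 : MemLp (fun ω => f (X ω)) 2 P) (hg2 : MemLp (fun ω => g (Y ω)) 2 P)
    (hft2 : MemLp (fun ω => ftil (X ω)) 2 P) (hgt2 : MemLp (fun ω => gtil (Y ω)) 2 P) :
    |covRV P (fun ω => f (X ω)) (fun ω => g (Y ω))|
        ≤ covRV P (fun ω => ftil (X ω)) (fun ω => gtil (Y ω))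
          + covRV P (fun ω => ftil (X ω)) (fun ω => gtil (Y ω)) ∧
    ∀ L : NNReal, LipschitzWith L f → LipschitzWith L g →
      MemLp X 2 P → MemLp Y 2 P →
      |covRV P (fun ω => f (X ω)) (fun ω => g (Y ω))| ≤ (L : ℝ) ^ 2 * covRV P X Y :=
  covariance_bound_for_dominated_functions_general P X Y hassoc f g ftil gtil hfm hgm hftm hgtm
    hfadd hfsub hgadd hgsub hf2 hg2 hft2 hgt2
end
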